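/- Fix a type X with decidable equality, m : ℕ, a finite set U : Finset X, sets S : Fin m → Finset X with S i ⊆ U for every i, and b : X with b ∉ U. Then for every natural number k, the following are equivalent: (1) there exists J ⊆ Fin m with J.card ≤ k and ⋃_{i ∈ J} S i = U; (2) there exists a membership decision tree T with at most k internal nodes such that eval T e = in for every e ∈ U and eval T b = out. -/

import Mathlib

/-!
A set cover `J` yields the decision list that tests `x ∈ S i` for `i ∈ J` in turn, answering
`in` at the first hit and `out` if there is none. Conversely, in any decision tree, every point
falsifying all tests along the all-false path from the root reaches the same leaf. The elements
of `U` and `b` must reach different leaves, but `b` lies in no `S i`; so every `e ∈ U` satisfies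
one of the at most `size T` tests on that path, and their indices cover `U`.
-/

/-- A decision tree: either a leaf with a label, or an internal node with a predicate,
a false-subtree and a true-subtree. -/
inductive DTree (X Y : Type*) where
  | leaf (y : Y) : DTree X Y
  | node (p : X → Bool) (f t : DTree X Y) : DTree X Y

namespace DTree

variable {X Y : Type*}

/-- Evaluation of a decision tree on an input. -/
def eval : DTree X Y → X → Y
  | leaf y, _ => y
  | node p f t, x => if p x then t.eval x else f.eval x

/-- Size of a decision tree: the number of internal nodes. -/
def size : DTree X Y → ℕ
  | leaf _ => 0
  | node _ f t => f.size + t.size + 1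

end DTree

/-- The two-element type of labels `{in, out}`. -/
inductive Lab where
  | inn : Lab
  | out : Lab
deriving DecidableEq

/-- A membership decision tree: every internal-node predicate is
`fun x => decide (x ∈ S i)` for some `i : Fin m`. -/
def IsMemTree {X : Type*} [DecidableEq X] {m : ℕ} (S : Fin m → Finset X) :
    DTree X Lab → Prop
  | DTree.leaf _ => True
  | DTree.node p f t =>
      (∃ i : Fin m, p = fun x => decide (x ∈ S i)) ∧ IsMemTree S f ∧ IsMemTree S t

namespace DTree

variable {X Y : Type*}

def falseSpine : DTree X Y → List (X → Bool)
  | leaf _ => []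
  | node p f _ => p :: f.falseSpine

def falseLabel : DTree X Y → Y
  | leaf y => y
  | node _ f _ => f.falseLabel

theorem length_falseSpine_le_size : ∀ T : DTree X Y, T.falseSpine.length ≤ T.size
  | leaf _ => le_rfl
  | node _ f t => by
    have := f.length_falseSpine_le_size
    simp only [falseSpine, size, List.length_cons]
    omega

theorem eval_eq_falseLabel {x : X} :
    ∀ T : DTree X Y, (∀ p ∈ T.falseSpine, p x = false) → T.eval x = T.falseLabel
  | leaf _, _ => rfl
  | node p f _, h => by
    rw [falseSpine, List.forall_mem_cons] at h
    simp only [eval, h.1, falseLabel, Bool.false_eq_true, if_false]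
    exact f.eval_eq_falseLabel h.2

def ofTests (yes no : Y) : List (X → Bool) → DTree X Y
  | [] => leaf no
  | p :: ps => node p (ofTests yes no ps) (leaf yes)

variable (yes no : Y)

@[simp]
theorem size_ofTests : ∀ ps : List (X → Bool), (ofTests yes no ps).size = ps.length
  | [] => rfl
  | _ :: ps => by simp [ofTests, size, size_ofTests ps]

open Classical in
theorem eval_ofTests (x : X) :
    ∀ ps : List (X → Bool), (ofTests yes no ps).eval x = if ∃ p ∈ ps, p x then yes else no
  | [] => by simp [ofTests, eval]
  | p :: ps => by
    by_cases hp : p x <;> simp [ofTests, eval, hp, eval_ofTests x ps]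

end DTree

section MemTree

open DTree

variable {X : Type*} [DecidableEq X] {m : ℕ} (S : Fin m → Finset X)

theorem isMemTree_ofTests_map (yes no : Lab) :
    ∀ l : List (Fin m), IsMemTree S (ofTests yes no (l.map fun i x => decide (x ∈ S i)))
  | [] => trivial
  | i :: l => ⟨⟨i, rfl⟩, isMemTree_ofTests_map yes no l, trivial⟩

variable {S}

theorem IsMemTree.falseSpine_mem_range :
    ∀ {T : DTree X Lab}, IsMemTree S T →
      T.falseSpine ∈ Set.range (List.map fun i x => decide (x ∈ S i))
  | leaf _, _ => ⟨[], rfl⟩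
  | node _ _ _, ⟨⟨i, hp⟩, hf, _⟩ => by
    obtain ⟨l, hl⟩ := hf.falseSpine_mem_range
    exact ⟨i :: l, by rw [List.map_cons, hl, hp, falseSpine]⟩

end MemTree

/-- Correctness of the Set Cover reduction: `U` has a set cover of size at most `k`
iff there is a membership decision tree with at most `k` internal nodes labeling every
element of `U` with `in` and the outside element `b` with `out`. -/
theorem setCover_iff_memTree
    {X : Type*} [DecidableEq X] (m : ℕ) (U : Finset X) (S : Fin m → Finset X)
    (hS : ∀ i, S i ⊆ U) (b : X) (hb : b ∉ U) (k : ℕ) :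
    (∃ J : Finset (Fin m), J.card ≤ k ∧ J.biUnion S = U) ↔
    (∃ T : DTree X Lab, IsMemTree S T ∧ T.size ≤ k ∧
      (∀ e ∈ U, T.eval e = Lab.inn) ∧ T.eval b = Lab.out) := by
  have hbS : ∀ i, b ∉ S i := fun i hbi => hb (hS i hbi)
  constructor
  · rintro ⟨J, hJk, rfl⟩
    refine ⟨.ofTests .inn .out (J.toList.map fun i x => decide (x ∈ S i)),
      isMemTree_ofTests_map S _ _ _, by simpa using hJk, fun e he => ?_, ?_⟩
    · obtain ⟨i, hi, hei⟩ := Finset.mem_biUnion.1 he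
      rw [DTree.eval_ofTests, if_pos ⟨_, List.mem_map_of_mem (Finset.mem_toList.2 hi), by simpa⟩]
    · simp [DTree.eval_ofTests, hbS]
  · rintro ⟨T, hT, hTk, hTU, hTb⟩
    obtain ⟨l, hl⟩ := hT.falseSpine_mem_range
    have eval_of_avoids (x : X) (hx : ∀ i ∈ l, x ∉ S i) : T.eval x = T.falseLabel :=
      T.eval_eq_falseLabel (by simpa [← hl] using hx)
    refine ⟨l.toFinset, ?_, (Finset.biUnion_subset.2 fun i _ => hS i).antisymm fun e he => ?_⟩
    · calc l.toFinset.card ≤ l.length := List.toFinset_card_le l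
        _ = T.falseSpine.length := by rw [← hl, List.length_map]
        _ ≤ k := T.length_falseSpine_le_size.trans hTk
    · by_contra hcov
      have he_avoids : ∀ i ∈ l, e ∉ S i := fun i hi hei =>
        hcov (Finset.mem_biUnion.2 ⟨i, List.mem_toFinset.2 hi, hei⟩)
      have := (eval_of_avoids e he_avoids).trans (eval_of_avoids b fun i _ => hbS i).symm
      rw [hTU e he, hTb] at this
      exact Lab.noConfusion this
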